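/- Let G be an infinite graph with upper density δ(G) < 1. Then NCL(G) ≥ 2/(1 - δ(G)). -/

import Mathlib

/-- `v` lies in the closed neighborhood `N[a]` of `a` in `G`. -/
def inNbhd {V : Type*} (G : SimpleGraph V) (a v : V) : Prop := a = v ∨ G.Adj a v

/-- `(b 0, …, b (n-1))` is a nested complexity sequence for `G`. -/
def IsNCS {V : Type*} (G : SimpleGraph V) (n : ℕ) (b : ℕ → V) : Prop :=
  ∀ k, k + 1 < n → ∃ a, (∀ i ≤ k, inNbhd G a (b i)) ∧ ¬ inNbhd G a (b (k + 1))

/-- The nested complexity length of `G`: the supremum of lengths of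
nested complexity sequences for `G`. -/
noncomputable def NCL {V : Type*} (G : SimpleGraph V) : ℕ∞ :=
  sSup {x : ℕ∞ | ∃ n : ℕ, x = n ∧ ∃ b : ℕ → V, IsNCS G n b}

open scoped Classical in
/-- Edge density of the finite induced subgraph of `G` on the finset `s`:
(ordered pairs of adjacent vertices in `s`) / (n(n-1)) = |E| / C(n,2). -/
noncomputable def finDensity {V : Type*} (G : SimpleGraph V) (s : Finset V) : ℝ :=
  ((s ×ˢ s).filter (fun p : V × V => G.Adj p.1 p.2)).card / (s.card * (s.card - 1) : ℝ)

open scoped Classical in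
/-- The upper density of `G`: the supremum of `α` such that `G` has arbitrarily
large finite subgraphs of density at least `α`. -/
noncomputable def upperDensity {V : Type*} (G : SimpleGraph V) : ℝ :=
  sSup {α : ℝ | ∀ N : ℕ, ∃ s : Finset V, N ≤ s.card ∧ α ≤ finDensity G s}

/-!
If `1 - 1/r < δ(G)`, then `G` has arbitrarily large finite subgraphs of density above the
Erdős–Stone threshold for `r + 1` parts. Deleting vertices of low degree one at a time keeps the
density high and leaves a large subgraph of high minimum degree, so the minimum-degree form of the
Erdős–Stone theorem puts a complete `(r + 1)`-partite graph with parts of size `t` into `G`, where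
`t` is chosen with `G` free of `t`-cliques (possible since `δ(G) < 1`). Each part then contains a
non-adjacent pair `xᵢ, yᵢ`, and `x₀, y₀, x₁, y₁, …` is a nested complexity sequence: the closed
neighbourhood of the partner of the next vertex contains every earlier vertex (all but possibly the
partner itself lie in other parts) but not the next vertex. The choice `r + 1 = ⌈1 / (1 - δ)⌉` gives length `2 (r + 1) ≥ 2 / (1 - δ)`.
-/

open Finset

lemma natCast_mul_natCast_sub_one_nonneg (n : ℕ) : (0 : ℝ) ≤ n * (n - 1) := by
  rcases n with _ | n
  · simp
  · push_cast
    simp only [add_sub_cancel_right]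
    positivity

namespace SimpleGraph

variable {V : Type*} (G : SimpleGraph V)

section DegreeIn

variable [DecidableRel G.Adj]

def degreeIn (s : Finset V) (v : V) : ℕ := #{u ∈ s | G.Adj v u}

lemma degree_induce_eq_degreeIn (s : Finset V) (v : s) :
    (G.induce (s : Set V)).degree v = G.degreeIn s v := by
  rw [← card_neighborFinset_eq_degree, degreeIn]
  exact card_bij (fun u _ => u.1) (by simp) (by simp) (by simp +contextual)

lemma degreeIn_lt_card {s : Finset V} {v : V} (hv : v ∈ s) : G.degreeIn s v < #s :=
  card_lt_card ⟨filter_subset _ _, fun h => G.irrefl (mem_filter.mp (h hv)).2⟩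

lemma sum_degreeIn_le_mul (s : Finset V) :
    ∑ v ∈ s, (G.degreeIn s v : ℝ) ≤ #s * (#s - 1) := by
  refine (sum_le_card_nsmul s _ _ fun v hv => ?_).trans_eq (nsmul_eq_mul _ _)
  have : (G.degreeIn s v : ℝ) + 1 ≤ #s := by exact_mod_cast G.degreeIn_lt_card hv
  linarith

variable {G} in
lemma IsClique.degreeIn_eq {s : Finset V} (hs : G.IsClique (s : Set V)) {v : V} (hv : v ∈ s) :
    G.degreeIn s v = #s - 1 := by
  classical
  rw [degreeIn, ← card_erase_of_mem hv]
  congr 1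
  ext u
  simp only [mem_filter, mem_erase]
  exact ⟨fun ⟨hu, hvu⟩ => ⟨hvu.ne.symm, hu⟩, fun ⟨huv, hu⟩ => ⟨hu, hs hv hu huv.symm⟩⟩

lemma finDensity_eq (s : Finset V) :
    finDensity G s = (∑ v ∈ s, (G.degreeIn s v : ℝ)) / (#s * (#s - 1)) := by
  simp only [finDensity, degreeIn, card_filter, sum_product]
  push_cast
  rfl

lemma degreeIn_eq_degreeIn_erase_add [DecidableEq V] {s : Finset V} {v : V} (hv : v ∈ s)
    (u : V) : G.degreeIn s u = G.degreeIn (s.erase v) u + if G.Adj u v then 1 else 0 := by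
  rw [degreeIn, degreeIn, filter_erase]
  split_ifs with huv
  · exact (card_erase_add_one (mem_filter.mpr ⟨hv, huv⟩)).symm
  · rw [erase_eq_of_notMem (fun h => huv (mem_filter.mp h).2), add_zero]

lemma sum_degreeIn_eq_sum_degreeIn_erase_add [DecidableEq V] {s : Finset V} {v : V}
    (hv : v ∈ s) :
    ∑ u ∈ s, G.degreeIn s u = ∑ u ∈ s.erase v, G.degreeIn (s.erase v) u + 2 * G.degreeIn s v := by
  have hback : ∑ u ∈ s.erase v, (if G.Adj u v then 1 else 0) = G.degreeIn s v := by
    rw [← card_filter, degreeIn, filter_erase, erase_eq_of_notMem (by simp)]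
    simp_rw [G.adj_comm]
  rw [← add_sum_erase s _ hv, sum_congr rfl fun u _ => G.degreeIn_eq_degreeIn_erase_add hv u,
    sum_add_distrib, hback]
  ring

lemma exists_subset_forall_le_degreeIn [DecidableEq V] (c B : ℝ) (s : Finset V)
    (hs : c * (#s * (#s - 1)) + B ≤ ∑ v ∈ s, (G.degreeIn s v : ℝ)) :
    ∃ t ⊆ s, (∀ v ∈ t, c * (#t - 1) ≤ G.degreeIn t v) ∧
      c * (#t * (#t - 1)) + B ≤ ∑ v ∈ t, (G.degreeIn t v : ℝ) := by
  induction s using Finset.strongInduction with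
  | H s ih =>
    by_cases hmin : ∀ v ∈ s, c * (#s - 1) ≤ G.degreeIn s v
    · exact ⟨s, subset_rfl, hmin, hs⟩
    push Not at hmin
    obtain ⟨v, hv, hlow⟩ := hmin
    have hsum : ∑ u ∈ s, (G.degreeIn s u : ℝ) =
        ∑ u ∈ s.erase v, (G.degreeIn (s.erase v) u : ℝ) + 2 * G.degreeIn s v := by
      exact_mod_cast G.sum_degreeIn_eq_sum_degreeIn_erase_add hv
    have hcard : (#(s.erase v) : ℝ) = #s - 1 := by
      rw [card_erase_of_mem hv, Nat.cast_pred (card_pos.mpr ⟨v, hv⟩)]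
    -- deleting `v` costs `2 deg v < c (#s (#s - 1) - (#s - 1) (#s - 2))`, so the bound survives
    obtain ⟨t, hts, ht⟩ := ih (s.erase v) (erase_ssubset hv) (by rw [hcard]; nlinarith)
    exact ⟨t, hts.trans (erase_subset v s), ht⟩

lemma exists_large_subset_forall_le_degreeIn [DecidableEq V] {c ε : ℝ} (hc : 0 ≤ c)
    (hε : 0 < ε) (M : ℕ) :
    ∃ N : ℕ, ∀ s : Finset V, N ≤ #s →
      (c + ε) * (#s * (#s - 1)) ≤ ∑ v ∈ s, (G.degreeIn s v : ℝ) →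
      ∃ t : Finset V, M ≤ #t ∧ ∀ v ∈ t, c * (#t - 1) ≤ G.degreeIn t v := by
  refine ⟨⌈(M : ℝ) ^ 2 / ε⌉₊ + 1, fun s hN hs => ?_⟩
  obtain ⟨t, -, hdeg, ht⟩ :=
    G.exists_subset_forall_le_degreeIn c (ε * (#s * (#s - 1))) s (by linarith)
  refine ⟨t, ?_, hdeg⟩
  -- the surplus `ε #s (#s - 1)` survives the deletion and forces `#t (#t - 1) ≥ M ^ 2`
  have hN' : (M : ℝ) ^ 2 / ε + 1 ≤ #s := by
    have : ((⌈(M : ℝ) ^ 2 / ε⌉₊ + 1 : ℕ) : ℝ) ≤ #s := by exact_mod_cast hN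
    push_cast at this
    linarith [Nat.le_ceil ((M : ℝ) ^ 2 / ε)]
  have hM : (M : ℝ) ^ 2 ≤ ε * (#s * (#s - 1)) := by
    rw [div_add_one hε.ne', div_le_iff₀ hε] at hN'
    nlinarith
  have ht0 := natCast_mul_natCast_sub_one_nonneg #t
  have := G.sum_degreeIn_le_mul t
  by_contra! hlt
  have : (#t : ℝ) + 1 ≤ M := by exact_mod_cast hlt
  nlinarith

end DegreeIn

lemma finDensity_nonneg (s : Finset V) : 0 ≤ finDensity G s := by
  classical
  rw [G.finDensity_eq]
  exact div_nonneg (sum_nonneg fun _ _ => Nat.cast_nonneg _) (natCast_mul_natCast_sub_one_nonneg _)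

lemma finDensity_le_one (s : Finset V) : finDensity G s ≤ 1 := by
  classical
  rw [G.finDensity_eq]
  exact div_le_one_of_le₀ (G.sum_degreeIn_le_mul s) (natCast_mul_natCast_sub_one_nonneg _)

lemma bddAbove_setOf_forall_exists_le_finDensity :
    BddAbove {α : ℝ | ∀ N : ℕ, ∃ s : Finset V, N ≤ #s ∧ α ≤ finDensity G s} :=
  ⟨1, fun _ hα => (hα 0).choose_spec.2.trans (G.finDensity_le_one _)⟩

lemma le_upperDensity {α : ℝ} (h : ∀ N : ℕ, ∃ s : Finset V, N ≤ #s ∧ α ≤ finDensity G s) :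
    α ≤ upperDensity G :=
  le_csSup G.bddAbove_setOf_forall_exists_le_finDensity h

lemma exists_le_finDensity_of_lt_upperDensity [Infinite V] {α : ℝ} (hα : α < upperDensity G)
    (N : ℕ) : ∃ s : Finset V, N ≤ #s ∧ α ≤ finDensity G s := by
  have hzero : ∀ N : ℕ, ∃ s : Finset V, N ≤ #s ∧ 0 ≤ finDensity G s := fun N =>
    let ⟨s, hs⟩ := Infinite.exists_subset_card_eq V N
    ⟨s, hs.ge, G.finDensity_nonneg s⟩
  obtain ⟨β, hβ, hαβ⟩ := exists_lt_of_lt_csSup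
    (s := {α : ℝ | ∀ N : ℕ, ∃ s : Finset V, N ≤ #s ∧ α ≤ finDensity G s}) ⟨0, hzero⟩ hα
  obtain ⟨s, hNs, hs⟩ := hβ N
  exact ⟨s, hNs, hαβ.le.trans hs⟩

lemma exists_le_sum_degreeIn_of_lt_upperDensity [DecidableRel G.Adj] [Infinite V] {α : ℝ}
    (hα : α < upperDensity G) (N : ℕ) :
    ∃ s : Finset V, N ≤ #s ∧ α * (#s * (#s - 1)) ≤ ∑ v ∈ s, (G.degreeIn s v : ℝ) := by
  obtain ⟨s, hNs, hs⟩ := G.exists_le_finDensity_of_lt_upperDensity hα (max N 2)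
  have h2 : (2 : ℝ) ≤ #s := by exact_mod_cast (le_max_right N 2).trans hNs
  rw [G.finDensity_eq, le_div_iff₀ (by nlinarith)] at hs
  exact ⟨s, (le_max_left N 2).trans hNs, hs⟩

lemma exists_cliqueFree_of_upperDensity_lt_one [Infinite V] (h : upperDensity G < 1) :
    ∃ t, G.CliqueFree t := by
  classical
  by_contra! hG
  refine h.not_ge (G.le_upperDensity fun N => ?_)
  obtain ⟨s, hs⟩ := not_forall_not.mp (hG (max N 2))
  have h2 : (2 : ℝ) ≤ #s := by exact_mod_cast hs.card_eq ▸ le_max_right N 2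
  refine ⟨s, hs.card_eq ▸ le_max_left N 2, ?_⟩
  rw [G.finDensity_eq, sum_congr rfl fun v hv => by rw [hs.isClique.degreeIn_eq hv],
    sum_const, nsmul_eq_mul, Nat.cast_pred (by exact_mod_cast h2.trans_lt' two_pos),
    div_self (by nlinarith)]

theorem exists_completeEquipartiteGraph_isContained_of_minDegree {ε : ℝ} (hε : 0 < ε)
    (r t : ℕ) :
    ∃ N : ℕ, ∀ {W : Type*} [Fintype W] (H : SimpleGraph W) [DecidableRel H.Adj],
      N ≤ Fintype.card W → (1 - 1 / r + ε) * Fintype.card W ≤ H.minDegree →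
      completeEquipartiteGraph (r + 1) t ⊑ H := by
  obtain ⟨N, hN⟩ :=
    Filter.eventually_atTop.mp (eventually_completeEquipartiteGraph_isContained_of_minDegree hε r t)
  refine ⟨N, fun H _ hW hδ => ?_⟩
  classical
  let e := H.overFinIso rfl
  exact (hN _ hW (G := H.overFin rfl) (by rw [← e.minDegree_eq]; exact hδ)).trans
    e.symm.isContained

lemma exists_large_subset_forall_le_degreeIn_of_lt_upperDensity [DecidableRel G.Adj]
    [DecidableEq V] [Infinite V] {c : ℝ} (hc : 0 ≤ c) (hcδ : c < upperDensity G) (M : ℕ) :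
    ∃ T : Finset V, M ≤ #T ∧ ∀ v ∈ T, c * (#T - 1) ≤ G.degreeIn T v := by
  obtain ⟨N, hN⟩ := G.exists_large_subset_forall_le_degreeIn hc
    (ε := (upperDensity G - c) / 2) (by linarith) M
  obtain ⟨s, hNs, hs⟩ := G.exists_le_sum_degreeIn_of_lt_upperDensity
    (α := c + (upperDensity G - c) / 2) (by linarith) N
  exact hN s hNs hs

theorem completeEquipartiteGraph_isContained_of_upperDensity [Infinite V] (r t : ℕ)
    (h : r * (1 - upperDensity G) < 1) : completeEquipartiteGraph (r + 1) t ⊑ G := by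
  classical
  rcases r.eq_zero_or_pos with rfl | hr
  · rw [completeEquipartiteGraph_eq_bot_iff.mpr (Or.inl le_rfl)]
    exact ⟨Copy.bot ((Fintype.equivFin _).toEmbedding.trans
      (Fin.valEmbedding.trans (Infinite.natEmbedding V)))⟩
  set θ : ℝ := 1 - 1 / r
  have hr' : (1 : ℝ) ≤ r := by exact_mod_cast hr
  have hθ : 0 ≤ θ := sub_nonneg.mpr ((div_le_one (by positivity)).mpr hr')
  have hθδ : θ < upperDensity G := by
    have : 1 - upperDensity G < 1 / r := by rw [lt_div_iff₀ (by positivity)]; linarith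
    linarith
  set ε := (upperDensity G - θ) / 3 with hε_def
  have hε : 0 < ε := by linarith
  obtain ⟨N, hES⟩ := exists_completeEquipartiteGraph_isContained_of_minDegree hε r t
  obtain ⟨T, hNT, hT⟩ := G.exists_large_subset_forall_le_degreeIn_of_lt_upperDensity
    (c := θ + 2 * ε) (by positivity) (by linarith) (max N ⌈(θ + 2 * ε) / ε⌉₊)
  have hεT : θ + 2 * ε ≤ ε * #T := by
    rw [← div_le_iff₀' hε]
    exact (Nat.le_ceil _).trans (by exact_mod_cast (le_max_right _ _).trans hNT)
  have hcard : Fintype.card (T : Set V) = #T := by simp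
  refine (hES (G.induce (T : Set V)) ?_ ?_).trans (Copy.induce G _).isContained
  · exact hcard ▸ (le_max_left _ _).trans hNT
  · have : Nonempty (T : Set V) :=
      (card_pos.mp (by exact_mod_cast (show (0 : ℝ) < #T by nlinarith))).to_set.to_subtype
    obtain ⟨v, hv⟩ := (G.induce (T : Set V)).exists_minimal_degree_vertex
    rw [hv, degree_induce_eq_degreeIn, hcard]
    nlinarith [hT v v.2]

end SimpleGraph

open SimpleGraph

section NestedComplexity

variable {V : Type*} {G : SimpleGraph V}

theorem isNCS_two_mul {r : ℕ} {b : ℕ → V}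
    (hpair : ∀ i < r, b (2 * i) ≠ b (2 * i + 1) ∧ ¬ G.Adj (b (2 * i)) (b (2 * i + 1)))
    (hcross : ∀ m < 2 * r, ∀ m' < 2 * r, m / 2 ≠ m' / 2 → G.Adj (b m) (b m')) :
    IsNCS G (2 * r) b := by
  intro k hk
  obtain ⟨j, rfl | rfl⟩ := Nat.even_or_odd' k
  · refine ⟨b (2 * j), fun i hi => ?_, fun h => ?_⟩
    · rcases hi.eq_or_lt with rfl | hi
      · exact Or.inl rfl
      · exact Or.inr (hcross _ (by omega) _ (by omega) (by omega))
    · obtain ⟨hne, hnadj⟩ := hpair j (by omega)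
      exact h.elim hne hnadj
  · refine ⟨b (2 * (j + 1) + 1), fun i hi => Or.inr (hcross _ (by omega) _ (by omega) (by omega)),
      fun h => ?_⟩
    obtain ⟨hne, hnadj⟩ := hpair (j + 1) (by omega)
    exact h.elim (fun h => hne h.symm) (fun h => hnadj h.symm)

theorem exists_isNCS_of_completeEquipartiteGraph_isContained {r t : ℕ} (hG : G.CliqueFree t)
    (h : completeEquipartiteGraph (r + 1) t ⊑ G) : ∃ b, IsNCS G (2 * (r + 1)) b := by
  obtain ⟨f⟩ := h
  have hpart : ∀ i, ∃ j₁ j₂, j₁ ≠ j₂ ∧ ¬ G.Adj (f (i, j₁)) (f (i, j₂)) := by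
    intro i
    by_contra! hadj
    exact (cliqueFree_iff.mp hG).false ⟨⟨fun j => f (i, j), fun hjj' => hadj _ _ hjj'⟩,
      fun j j' hjj' => (Prod.ext_iff.mp (f.injective hjj')).2⟩
  choose j₁ j₂ hne hnadj using hpart
  let part (m : ℕ) : Fin (r + 1) := Fin.ofNat (r + 1) (m / 2)
  have hpart_val {m : ℕ} (hm : m < 2 * (r + 1)) : (part m : ℕ) = m / 2 :=
    Nat.mod_eq_of_lt (by omega)
  refine ⟨fun m => f (part m, if m % 2 = 0 then j₁ (part m) else j₂ (part m)),
    isNCS_two_mul (fun i hi => ?_) (fun m hm m' hm' hmm' => ?_)⟩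
  · have h₁ : part (2 * i + 1) = part (2 * i) := by simp only [part]; congr 1; omega
    rw [if_pos (by omega), if_neg (by omega), h₁]
    exact ⟨fun h => hne _ (Prod.ext_iff.mp (f.injective h)).2, hnadj _⟩
  · exact f.toHom.map_adj (completeEquipartiteGraph_adj.mpr fun h =>
      hmm' (by rw [← hpart_val hm, ← hpart_val hm']; exact congrArg Fin.val h))

theorem le_NCL {n : ℕ} {b : ℕ → V} (hb : IsNCS G n b) : (n : ℕ∞) ≤ NCL G :=
  le_sSup ⟨n, rfl, b, hb⟩

end NestedComplexity

/-- For an infinite graph `G` with upper density `δ(G) < 1`,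
`NCL G ≥ 2 / (1 - δ(G))`. -/
theorem stmt_8 {V : Type*} [Infinite V] (G : SimpleGraph V)
    (h : upperDensity G < 1) :
    ((⌈(2 : ℝ) / (1 - upperDensity G)⌉₊ : ℕ) : ℕ∞) ≤ NCL G := by
  set δ := upperDensity G
  have hδ : 0 < 1 - δ := by linarith
  obtain ⟨t, hG⟩ := G.exists_cliqueFree_of_upperDensity_lt_one h
  obtain ⟨r, hr⟩ : ∃ r, ⌈1 / (1 - δ)⌉₊ = r + 1 :=
    Nat.exists_eq_add_one.mpr (Nat.ceil_pos.mpr (by positivity))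
  have hr_lt : (r : ℝ) < 1 / (1 - δ) := by
    have := Nat.ceil_lt_add_one (one_div_pos.mpr hδ).le
    rw [hr] at this
    push_cast at this
    linarith
  have hK := G.completeEquipartiteGraph_isContained_of_upperDensity r t
    (by rwa [lt_div_iff₀ hδ] at hr_lt)
  obtain ⟨b, hb⟩ := exists_isNCS_of_completeEquipartiteGraph_isContained hG hK
  refine le_trans ?_ (le_NCL hb)
  have h2r : 2 / (1 - δ) ≤ ((2 * (r + 1) : ℕ) : ℝ) := by
    rw [← hr, Nat.cast_mul, Nat.cast_two, ← mul_one_div 2]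
    exact mul_le_mul_of_nonneg_left (Nat.le_ceil _) zero_le_two
  exact_mod_cast Nat.ceil_le.mpr h2r
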